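/- Let P₀ ∈ ℍ[t] and R ∈ ℝ[t] with P₀·P₁ = R for some P₁ ∈ ℍ[t], where neither P₀ nor P₁ has a nonconstant real polynomial factor. Then R = conj(P₀)·P₀ up to a real scalar and P₁ = conj(P₀) up to a real scalar. -/

import Mathlib

/-!
Write `N` for the real polynomial `conj P₀ · P₀`. Multiplying `P₀ P₁ = R` on the left by `conj P₀`
gives `N P₁ = conj P₀ · R`. Cancelling `gcd N R` leaves `a P₁ = conj P₀ · b` with `a`, `b` coprime
real polynomials, and since real polynomials are central a Bézout identity shows `a ∣ conj P₀`,
hence `a ∣ P₀`; conjugating the relation shows likewise `b ∣ P₁`. Both are therefore constants,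
so `R` is a real multiple of `N` and then `P₁` the same multiple of `conj P₀`.
-/

open Polynomial
open scoped Quaternion

noncomputable def qconj (P : ℍ[ℝ][X]) : ℍ[ℝ][X] :=
  ∑ i ∈ P.support, Polynomial.C (star (P.coeff i)) * Polynomial.X ^ i

local notation "ι" => Polynomial.map (algebraMap ℝ ℍ[ℝ])

theorem commute_map_algebraMap (r : ℝ[X]) (Q : ℍ[ℝ][X]) : Commute (ι r) Q := by
  induction r using Polynomial.induction_on' with
  | add p q hp hq => rw [Polynomial.map_add]; exact hp.add_left hq
  | monomial n a =>
    rw [Polynomial.map_monomial, ← C_mul_X_pow_eq_monomial, ← Polynomial.algebraMap_apply]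
    exact (Algebra.commute_algebraMap_left a Q).mul_left (commute_X_pow Q n)

theorem qconj_coeff (P : ℍ[ℝ][X]) (n : ℕ) : (qconj P).coeff n = star (P.coeff n) := by
  simp only [qconj, finsetSum_coeff, coeff_C_mul_X_pow]
  rw [Finset.sum_ite_eq]
  split_ifs with h
  · rfl
  · rw [notMem_support_iff.mp h, star_zero]

theorem qconj_qconj (P : ℍ[ℝ][X]) : qconj (qconj P) = P :=
  Polynomial.ext fun n => by rw [qconj_coeff, qconj_coeff, star_star]

theorem qconj_mul (P Q : ℍ[ℝ][X]) : qconj (P * Q) = qconj Q * qconj P := by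
  refine Polynomial.ext fun n => ?_
  simp only [qconj_coeff, coeff_mul, star_sum, star_mul]
  rw [← Finset.Nat.sum_antidiagonal_swap]
  rfl

theorem qconj_map_algebraMap (r : ℝ[X]) : qconj (ι r) = ι r :=
  Polynomial.ext fun n => by
    rw [qconj_coeff, coeff_map, Quaternion.algebraMap_def, Quaternion.star_coe]

theorem exists_map_algebraMap_eq_of_qconj_eq {P : ℍ[ℝ][X]} (h : qconj P = P) :
    ∃ r : ℝ[X], ι r = P := by
  refine (mem_lifts P).mp <| (lifts_iff_coeff_lifts P).mpr fun n => ⟨(P.coeff n).re, ?_⟩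
  rw [Quaternion.algebraMap_def]
  exact (Quaternion.star_eq_self.mp (by rw [← qconj_coeff, h])).symm

theorem map_algebraMap_dvd_qconj_iff (r : ℝ[X]) (P : ℍ[ℝ][X]) :
    ι r ∣ qconj P ↔ ι r ∣ P := by
  suffices ∀ P, ι r ∣ P → ι r ∣ qconj P from
    ⟨fun h => qconj_qconj P ▸ this _ h, this P⟩
  rintro P ⟨Q, rfl⟩
  exact ⟨qconj Q, by rw [qconj_mul, qconj_map_algebraMap, (commute_map_algebraMap r _).eq]⟩

theorem map_algebraMap_dvd_of_isCoprime {a b : ℝ[X]} (hab : IsCoprime a b) {Q S : ℍ[ℝ][X]}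
    (h : ι a * S = Q * ι b) : ι a ∣ Q := by
  obtain ⟨u, v, huv⟩ := hab
  refine ⟨Q * ι u + ι v * S, ?_⟩
  calc Q = Q * ι u * ι a + Q * ι v * ι b := by
        rw [mul_assoc, mul_assoc, ← mul_add, ← Polynomial.map_mul, ← Polynomial.map_mul,
          ← Polynomial.map_add, huv, Polynomial.map_one, mul_one]
    _ = ι a * (Q * ι u) + ι v * (ι a * S) := by
        rw [(commute_map_algebraMap a _).eq, (commute_map_algebraMap v _).eq, h, mul_assoc Q (ι v),
          mul_assoc Q (ι b), (commute_map_algebraMap v (ι b)).eq]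
    _ = ι a * (Q * ι u + ι v * S) := by
        rw [mul_add, ← mul_assoc (ι v), (commute_map_algebraMap v (ι a)).eq, mul_assoc]

def HasNoRealFactor (P : ℍ[ℝ][X]) : Prop :=
  ∀ r : ℝ[X], 0 < r.degree → ¬ ι r ∣ P

namespace HasNoRealFactor

variable {P : ℍ[ℝ][X]}

theorem ne_zero (hP : HasNoRealFactor P) : P ≠ 0 := by
  rintro rfl
  exact hP X (by rw [degree_X]; exact zero_lt_one) (dvd_zero _)

theorem qconj (hP : HasNoRealFactor P) : HasNoRealFactor (qconj P) :=
  fun r hr hrP => hP r hr ((map_algebraMap_dvd_qconj_iff r P).mp hrP)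

theorem exists_eq_C_of_map_dvd (hP : HasNoRealFactor P) {r : ℝ[X]} (h : ι r ∣ P) :
    ∃ c, r = C c :=
  ⟨_, eq_C_of_degree_le_zero (not_lt.mp fun hr => hP r hr h)⟩

end HasNoRealFactor

theorem exists_eq_C_mul_of_map_mul_eq {N R : ℝ[X]} (hN : N ≠ 0) (hR : R ≠ 0) {Q S : ℍ[ℝ][X]}
    (hQ : HasNoRealFactor Q) (hS : HasNoRealFactor S) (h : ι N * S = Q * ι R) :
    ∃ c : ℝ, c ≠ 0 ∧ R = C c * N := by
  obtain ⟨a, b, hNa, hRb, hunit⟩ := extract_gcd N R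
  set d := gcd N R
  have hab : IsCoprime a b := (gcd_isUnit_iff a b).mp hunit
  have hd : ι d ≠ 0 := Polynomial.map_ne_zero (gcd_ne_zero_of_right hR)
  have hcancel : ι a * S = Q * ι b := by
    refine mul_left_cancel₀ hd ?_
    rw [← mul_assoc, ← Polynomial.map_mul, ← hNa, h, hRb, Polynomial.map_mul, ← mul_assoc,
      ← (commute_map_algebraMap d Q).eq, mul_assoc]
  have hcancel' : ι b * qconj Q = qconj S * ι a := by
    rw [← qconj_map_algebraMap a, ← qconj_map_algebraMap b, ← qconj_mul, ← qconj_mul, hcancel]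
  obtain ⟨α, rfl⟩ := hQ.exists_eq_C_of_map_dvd (map_algebraMap_dvd_of_isCoprime hab hcancel)
  obtain ⟨β, rfl⟩ := hS.exists_eq_C_of_map_dvd
    ((map_algebraMap_dvd_qconj_iff b S).mp (map_algebraMap_dvd_of_isCoprime hab.symm hcancel'))
  have hα : α ≠ 0 := by rintro rfl; rw [C_0, mul_zero] at hNa; exact hN hNa
  have hβ : β ≠ 0 := by rintro rfl; rw [C_0, mul_zero] at hRb; exact hR hRb
  refine ⟨β / α, div_ne_zero hβ hα, ?_⟩
  rw [hRb, hNa, mul_left_comm, ← C_mul, div_mul_cancel₀ β hα]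

/-- If `P₀ P₁ = R` with `R` real and neither `P₀` nor `P₁` having a nonconstant
real polynomial factor, then `R = conj P₀ ⬝ P₀` and `P₁ = conj P₀`, up to real
scalars. -/
theorem real_product_forces_conjugate (P₀ P₁ : ℍ[ℝ][X]) (R : ℝ[X])
    (h : P₀ * P₁ = R.map (algebraMap ℝ ℍ[ℝ]))
    (hP₀ : ∀ r : ℝ[X], 0 < r.degree → ¬ r.map (algebraMap ℝ ℍ[ℝ]) ∣ P₀)
    (hP₁ : ∀ r : ℝ[X], 0 < r.degree → ¬ r.map (algebraMap ℝ ℍ[ℝ]) ∣ P₁) :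
    ∃ lam mu : ℝ, lam ≠ 0 ∧ mu ≠ 0 ∧
      R.map (algebraMap ℝ ℍ[ℝ]) =
        Polynomial.C (algebraMap ℝ ℍ[ℝ] lam) * (qconj P₀ * P₀) ∧
      P₁ = Polynomial.C (algebraMap ℝ ℍ[ℝ] mu) * qconj P₀ := by
  replace hP₀ : HasNoRealFactor P₀ := hP₀
  replace hP₁ : HasNoRealFactor P₁ := hP₁
  obtain ⟨N, hN⟩ := exists_map_algebraMap_eq_of_qconj_eq (P := qconj P₀ * P₀)
    (by rw [qconj_mul, qconj_qconj])
  have hN0 : N ≠ 0 := by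
    rintro rfl
    exact mul_ne_zero hP₀.qconj.ne_zero hP₀.ne_zero (by rw [← hN, Polynomial.map_zero])
  have hR0 : R ≠ 0 := by
    rintro rfl
    exact mul_ne_zero hP₀.ne_zero hP₁.ne_zero (by rw [h, Polynomial.map_zero])
  have hNP₁ : ι N * P₁ = qconj P₀ * ι R := by rw [hN, mul_assoc, h]
  obtain ⟨c, hc, rfl⟩ := exists_eq_C_mul_of_map_mul_eq hN0 hR0 hP₀.qconj hP₁ hNP₁
  have hιN : ι N ≠ 0 := Polynomial.map_ne_zero hN0
  refine ⟨c, c, hc, hc, by rw [Polynomial.map_mul, map_C, hN], mul_left_cancel₀ hιN ?_⟩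
  calc ι N * P₁ = qconj P₀ * ι (C c * N) := hNP₁
    _ = ι (C c * N) * qconj P₀ := ((commute_map_algebraMap _ _).eq).symm
    _ = ι N * (C (algebraMap ℝ ℍ[ℝ] c) * qconj P₀) := by
      rw [mul_comm, Polynomial.map_mul, map_C, mul_assoc]
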